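/- arXiv:1203.0757 — 3 statements merged into one kernel-verified Lean document; each statement's English description precedes it below -/
import Mathlib

section
/- Let s ≥ 2 and n ≥ 2 be integers. If G is a connected simple graph with n vertices such that d(u) + d(v) ≥ n - s + 1 for each pair of distinct non-adjacent vertices u and v, then G contains a spanning tree with at most s leaves. -/
/-!
Take a longest path `P = a ⋯ b` of `G`, with `m` vertices, and extend it to a spanning tree `T`.
Interior vertices of `P` have degree at least two in `T`, so `T` has at most `n - m + 2` leaves.
If `m < n`, maximality puts every neighbour of `a` and of `b` on `P`, and there is no `i` with
`b ~ vᵢ` and `a ~ vᵢ₊₁`: otherwise `a, vᵢ₊₁, …, b, vᵢ, …, a` is a cycle through the vertices of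
`P`, which connectivity extends to a longer path. Hence `a ≠ b`, `a ≁ b` and
`d(a) + d(b) ≤ m - 1`, so the degree condition gives `n - s + 2 ≤ m`.
-/

open scoped Classical

namespace List

variable {α : Type*} {l : List α} {x y : α}

theorem mem_consecutivePairs_of_infix (h : [x, y] <:+: l) : (x, y) ∈ l.consecutivePairs := by
  obtain ⟨s, t, rfl⟩ := h
  induction s with
  | nil => simp [consecutivePairs]
  | cons a s ih =>
    obtain ⟨b, r, hr⟩ : ∃ b r, s ++ [x, y] ++ t = b :: r := by
      cases s <;> simp
    rw [hr] at ih
    simp_all [consecutivePairs]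

theorem exists_infix_pair_of_head?_ne (hy : y ∈ l) (h : l.head? ≠ some y) :
    ∃ x, [x, y] <:+: l := by
  obtain ⟨s, t, rfl⟩ := append_of_mem hy
  rcases eq_nil_or_concat' s with rfl | ⟨s, x, rfl⟩
  · simp at h
  · exact ⟨x, s, t, by simp⟩

theorem exists_infix_pair_of_getLast?_ne (hx : x ∈ l) (h : l.getLast? ≠ some x) :
    ∃ y, [x, y] <:+: l := by
  obtain ⟨y, hy⟩ := exists_infix_pair_of_head?_ne (mem_reverse.2 hx) (by rwa [head?_reverse])
  exact ⟨y, reverse_infix.1 (by simpa using hy)⟩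

theorem exists_infix_triple_of_head?_ne_of_getLast?_ne (hy : y ∈ l) (h₁ : l.head? ≠ some y)
    (h₂ : l.getLast? ≠ some y) : ∃ x z, [x, y, z] <:+: l := by
  obtain ⟨s, t, rfl⟩ := append_of_mem hy
  rcases eq_nil_or_concat' s with rfl | ⟨s, x, rfl⟩
  · simp at h₁
  rcases t with _ | ⟨z, t⟩
  · simp at h₂
  exact ⟨x, z, s, t, by simp⟩

theorem Nodup.eq_singleton_of_head?_eq_getLast? (hl : l.Nodup) (hx : l.head? = some x)
    (hx' : l.getLast? = some x) : l = [x] := by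
  rcases l with _ | ⟨y, t⟩
  · simp at hx
  obtain rfl : y = x := by simpa using hx
  rcases eq_nil_or_concat' t with rfl | ⟨t, z, rfl⟩
  · rfl
  · rw [getLast?_cons, getLast?_append_of_ne_nil _ (cons_ne_nil _ _)] at hx'
    simp_all

theorem exists_notMem_of_length_lt_card [Fintype α] (h : l.length < Fintype.card α) :
    ∃ a, a ∉ l := by
  by_contra! hl
  refine h.not_ge ((Finset.card_le_card fun a _ => mem_toFinset.2 (hl a)).trans ?_)
  exact toFinset_card_le l

end List

namespace Cycle

variable {α : Type*} {R : α → α → Prop} {c : List α} {v : α}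

theorem Chain.exists_isChain_cons_perm (h : Chain R (c : Cycle α)) (hv : v ∈ c) :
    ∃ t, (v :: t).Perm c ∧ (v :: t).IsChain R := by
  obtain ⟨s, t, rfl⟩ := List.append_of_mem hv
  have hrot : Chain R (v :: (t ++ s) : List α) := by
    rwa [← coe_eq_coe.2 List.isRotated_append] at h
  refine ⟨t ++ s, List.perm_append_comm (l₁ := v :: t), ?_⟩
  rw [chain_coe_cons, ← List.cons_append] at hrot
  exact hrot.infix (List.prefix_append _ _).isInfix

end Cycle

namespace SimpleGraph

variable {V : Type*} {G : SimpleGraph V}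

theorem cycleChain_of_crossing {p q : List V} {x y a b : V}
    (hl : (p ++ x :: y :: q).IsChain G.Adj) (ha : (p ++ x :: y :: q).head? = some a)
    (hb : (p ++ x :: y :: q).getLast? = some b) (hay : G.Adj a y) (hbx : G.Adj b x) :
    Cycle.Chain G.Adj (y :: (q ++ x :: p.reverse) : List V) := by
  have hpx : (p ++ [x]).IsChain G.Adj := hl.infix ⟨[], y :: q, by simp⟩
  have hyq : (y :: q).IsChain G.Adj := hl.infix ⟨p ++ [x], [], by simp⟩
  have hrev : (p ++ [x]).reverse.IsChain G.Adj :=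
    List.isChain_reverse.2 (hpx.imp fun _ _ h => h.symm)
  have ha' : (p ++ [x]).reverse.getLast? = some a := by
    rw [List.getLast?_reverse, ← ha]; simp [List.head?_append]
  have hb' : (y :: q).getLast? = some b := by
    rw [← hb, List.getLast?_append_of_ne_nil _ (List.cons_ne_nil _ _), List.getLast?_cons_cons]
  have hsplit : y :: (q ++ x :: p.reverse ++ [y]) = (y :: q) ++ ((p ++ [x]).reverse ++ [y]) := by
    simp
  rw [Cycle.chain_coe_cons, hsplit, List.isChain_append, List.isChain_append, ha', hb']
  exact ⟨hyq, ⟨hrev, List.isChain_singleton y, by simpa using hay⟩, by simpa using hbx⟩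

theorem Preconnected.exists_adj_of_mem_of_notMem (h : G.Preconnected) {S : Set V} {u w : V}
    (hu : u ∈ S) (hw : w ∉ S) : ∃ x ∈ S, ∃ y ∉ S, G.Adj x y := by
  obtain ⟨p⟩ := h u w
  obtain ⟨d, -, hd₁, hd₂⟩ := p.exists_boundary_dart S hu hw
  exact ⟨_, hd₁, _, hd₂, d.adj⟩

def listPathGraph : List V → SimpleGraph V
  | x :: y :: l => edge x y ⊔ listPathGraph (y :: l)
  | _ => ⊥

theorem listPathGraph_le {l : List V} (h : l.IsChain G.Adj) : listPathGraph l ≤ G := by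
  induction l using List.twoStepInduction with
  | nil | singleton => exact bot_le
  | cons_cons x y l _ ih =>
    rw [List.isChain_cons_cons] at h
    exact sup_le ((edge_le_iff _).2 (.inr h.1)) (ih y h.2)

theorem mem_of_listPathGraph_adj {l : List V} {u v : V} (h : (listPathGraph l).Adj u v) :
    u ∈ l := by
  induction l using List.twoStepInduction generalizing u v with
  | nil | singleton => exact h.elim
  | cons_cons x y l _ ih =>
    rcases h with h | h
    · rw [edge_adj] at h
      rcases h.1 with ⟨rfl, -⟩ | ⟨rfl, -⟩ <;> simp
    · exact List.mem_cons_of_mem _ (ih y h)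

theorem isChain_listPathGraph {l : List V} (h : l.IsChain G.Adj) :
    l.IsChain (listPathGraph l).Adj := by
  induction l using List.twoStepInduction with
  | nil | singleton => simp
  | cons_cons x y l _ ih =>
    rw [List.isChain_cons_cons] at h ⊢
    exact ⟨.inl ((edge_adj ..).2 ⟨.inl ⟨rfl, rfl⟩, h.1.ne⟩), (ih y h.2).imp fun _ _ => .inr⟩

theorem isAcyclic_listPathGraph {l : List V} (h : l.Nodup) : (listPathGraph l).IsAcyclic := by
  induction l using List.twoStepInduction with
  | nil | singleton => exact isAcyclic_bot
  | cons_cons x y l _ ih =>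
    rw [List.nodup_cons] at h
    rw [listPathGraph, sup_comm]
    refine (ih y h.2).sup_edge_of_not_reachable fun ⟨p⟩ => h.1 ?_
    exact mem_of_listPathGraph_adj (p.adj_snd (p.not_nil_of_ne fun hxy => h.1 (hxy ▸ by simp)))

structure IsLongestPath (G : SimpleGraph V) (l : List V) : Prop where
  isChain : l.IsChain G.Adj
  nodup : l.Nodup
  length_le : ∀ l' : List V, l'.IsChain G.Adj → l'.Nodup → l'.length ≤ l.length

theorem exists_isLongestPath [Fintype V] [Nonempty V] (G : SimpleGraph V) :
    ∃ l, G.IsLongestPath l ∧ l ≠ [] := by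
  let P : ℕ → Prop := fun k => ∃ l : List V, l.IsChain G.Adj ∧ l.Nodup ∧ l.length = k
  have hP : P 1 := ⟨[Classical.arbitrary V], by simp, by simp, rfl⟩
  obtain ⟨l, hc, hnd, hlen⟩ := Nat.findGreatest_spec (Fintype.card_pos (α := V)) hP
  refine ⟨l, ⟨hc, hnd, fun l' hc' hnd' => ?_⟩, ?_⟩
  · exact hlen ▸ Nat.le_findGreatest hnd'.length_le_card ⟨l', hc', hnd', rfl⟩
  · rintro rfl
    have := Nat.le_findGreatest (Fintype.card_pos (α := V)) hP
    simp only [List.length_nil] at hlen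
    omega

theorem degree_add_degree_lt_length [Fintype V] {l : List V} {a b : V}
    (ha : l.head? = some a) (hb : l.getLast? = some b)
    (hNa : ∀ w, G.Adj a w → w ∈ l) (hNb : ∀ w, G.Adj b w → w ∈ l)
    (hcross : ∀ x y, [x, y] <:+: l → G.Adj b x → G.Adj a y → False) :
    G.degree a + G.degree b < l.length := by
  set E : Finset (V × V) := Finset.univ.filter fun e => [e.1, e.2] <:+: l
  set A := E.filter fun e => G.Adj a e.2
  set B := E.filter fun e => G.Adj b e.1
  have hA : G.neighborFinset a ⊆ A.image Prod.snd := by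
    intro y hy
    rw [mem_neighborFinset] at hy
    obtain ⟨x, hx⟩ := List.exists_infix_pair_of_head?_ne (hNa y hy) (by simpa [ha] using hy.ne)
    exact Finset.mem_image.2 ⟨(x, y), by simpa [A, E] using ⟨hx, hy⟩, rfl⟩
  have hB : G.neighborFinset b ⊆ B.image Prod.fst := by
    intro x hx
    rw [mem_neighborFinset] at hx
    obtain ⟨y, hy⟩ := List.exists_infix_pair_of_getLast?_ne (hNb x hx) (by simpa [hb] using hx.ne)
    exact Finset.mem_image.2 ⟨(x, y), by simpa [B, E] using ⟨hy, hx⟩, rfl⟩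
  have hAB : Disjoint A B := Finset.disjoint_left.2 fun e heA heB => by
    simp only [A, B, E, Finset.mem_filter, Finset.mem_univ, true_and] at heA heB
    exact hcross e.1 e.2 heA.1 heB.2 heA.2
  have hE : E ⊆ l.consecutivePairs.toFinset := fun e he => by
    simp only [E, Finset.mem_filter, Finset.mem_univ, true_and] at he
    exact List.mem_toFinset.2 (List.mem_consecutivePairs_of_infix he)
  calc G.degree a + G.degree b
      ≤ A.card + B.card := by
        rw [← card_neighborFinset_eq_degree, ← card_neighborFinset_eq_degree]
        exact add_le_add ((Finset.card_le_card hA).trans Finset.card_image_le)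
          ((Finset.card_le_card hB).trans Finset.card_image_le)
    _ = (A ∪ B).card := (Finset.card_union_of_disjoint hAB).symm
    _ ≤ l.consecutivePairs.length :=
        (Finset.card_le_card ((Finset.union_subset (Finset.filter_subset _ _)
          (Finset.filter_subset _ _)).trans hE)).trans (List.toFinset_card_le _)
    _ < l.length := by
        have : l ≠ [] := by rintro rfl; simp at ha
        have := List.length_pos_of_ne_nil this
        rw [List.consecutivePairs, List.length_zip, List.length_tail]
        omega

namespace IsLongestPath

variable {l : List V} {a b w : V}

theorem reverse (h : G.IsLongestPath l) : G.IsLongestPath l.reverse :=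
  ⟨List.isChain_reverse.2 (h.isChain.imp fun _ _ h => h.symm), List.nodup_reverse.2 h.nodup,
    fun l' hc hnd => (List.length_reverse (as := l)).symm ▸ h.length_le l' hc hnd⟩

theorem mem_of_adj_head (h : G.IsLongestPath l) (ha : l.head? = some a) (haw : G.Adj a w) :
    w ∈ l := by
  by_contra hw
  have hc : (w :: l).IsChain G.Adj := List.isChain_cons.2 ⟨by simpa [ha] using haw.symm, h.isChain⟩
  have := h.length_le (w :: l) hc (List.nodup_cons.2 ⟨hw, h.nodup⟩)
  simp at this

theorem mem_of_adj_getLast (h : G.IsLongestPath l) (hb : l.getLast? = some b) (hbw : G.Adj b w) :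
    w ∈ l :=
  List.mem_reverse.1 (h.reverse.mem_of_adj_head (by rwa [List.head?_reverse]) hbw)

theorem not_cycleChain (h : G.IsLongestPath l) (hconn : G.Preconnected) (hw : w ∉ l)
    {c : List V} (hperm : c.Perm l) (hc : Cycle.Chain G.Adj (c : Cycle V)) : False := by
  have hlen : 1 ≤ c.length := hperm.length_eq ▸ h.length_le [w] (by simp) (by simp)
  obtain ⟨u, hu⟩ := List.exists_mem_of_length_pos hlen
  obtain ⟨x, hx, y, hy, hxy⟩ :=
    hconn.exists_adj_of_mem_of_notMem (S := {v | v ∈ c}) hu (by simpa [hperm.mem_iff] using hw)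
  obtain ⟨t, hperm', hct⟩ := hc.exists_isChain_cons_perm hx
  have hperm'' := hperm'.trans hperm
  have := h.length_le (y :: x :: t) (List.isChain_cons_cons.2 ⟨hxy.symm, hct⟩)
    (List.nodup_cons.2 ⟨fun hy' => hy (hperm'.mem_iff.1 hy'), hperm''.nodup_iff.2 h.nodup⟩)
  simp [← hperm''.length_eq] at this

theorem degree_add_degree_lt [Fintype V] (h : G.IsLongestPath l) (hconn : G.Preconnected)
    (hw : w ∉ l) (ha : l.head? = some a) (hb : l.getLast? = some b) :
    G.degree a + G.degree b < l.length := by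
  refine degree_add_degree_lt_length ha hb
    (fun _ => h.mem_of_adj_head ha) (fun _ => h.mem_of_adj_getLast hb) ?_
  rintro x y ⟨p, q, rfl⟩ hbx hay
  simp only [List.append_assoc, List.cons_append, List.nil_append] at h hw ha hb
  refine h.not_cycleChain hconn hw ?_ (cycleChain_of_crossing h.isChain ha hb hay hbx)
  have hsplit : y :: (q ++ x :: p.reverse) = (y :: q) ++ (p ++ [x]).reverse := by simp
  rw [hsplit]
  exact List.perm_append_comm.trans (((List.reverse_perm _).append_right _).trans (by simp))

theorem exists_ne_not_adj_degree_add_degree_lt [Fintype V] (h : G.IsLongestPath l)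
    (hconn : G.Connected) (hw : w ∉ l) :
    ∃ a b, a ≠ b ∧ ¬G.Adj a b ∧ G.degree a + G.degree b < l.length := by
  have hl : l ≠ [] := by
    rintro rfl
    simpa using h.length_le [w] (by simp) (by simp)
  have ha : l.head? = some (l.head hl) := List.head?_eq_some_head hl
  have hb : l.getLast? = some (l.getLast hl) := List.getLast?_eq_some_getLast hl
  refine ⟨_, _, fun hab => ?_, fun hadj => ?_, h.degree_add_degree_lt hconn.preconnected hw ha hb⟩
  · obtain ⟨u, hu⟩ := (hconn.preconnected (l.head hl) w).nonempty_neighborSet_left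
      fun h' => hw (by rw [← h']; exact List.head_mem hl)
    have hul := h.mem_of_adj_head ha hu
    rw [List.Nodup.eq_singleton_of_head?_eq_getLast? h.nodup ha (hab ▸ hb)] at hul
    exact G.irrefl (by rwa [List.mem_singleton.1 hul] at hu)
  · refine h.not_cycleChain hconn.preconnected hw (List.Perm.refl l) ?_
    rw [Cycle.chain_ne_nil _ hl]
    exact List.isChain_cons.2 ⟨by simpa [ha] using hadj.symm, h.isChain⟩

end IsLongestPath

section Leaves

variable [Fintype V] {T : SimpleGraph V} {l : List V}

theorem two_le_degree_of_isChain (hc : l.IsChain T.Adj) (hnd : l.Nodup) {v : V} (hv : v ∈ l)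
    (ha : l.head? ≠ some v) (hb : l.getLast? ≠ some v) : 2 ≤ T.degree v := by
  obtain ⟨x, z, hxz⟩ := List.exists_infix_triple_of_head?_ne_of_getLast?_ne hv ha hb
  have hadj : T.Adj x v ∧ T.Adj v z := by simpa using hc.infix hxz
  have hne : (x ≠ v ∧ x ≠ z) ∧ v ≠ z := by simpa using hnd.sublist hxz.sublist
  rw [← card_neighborFinset_eq_degree, ← Finset.card_pair hne.1.2]
  refine Finset.card_le_card fun u hu => ?_
  rcases Finset.mem_insert.1 hu with rfl | hu
  · exact (mem_neighborFinset _ _ _).2 hadj.1.symm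
  · exact (mem_neighborFinset _ _ _).2 (Finset.mem_singleton.1 hu ▸ hadj.2)

theorem card_leaves_add_length_le (hc : l.IsChain T.Adj) (hnd : l.Nodup) (hl : l ≠ []) :
    (Finset.univ.filter fun v => T.degree v = 1).card + l.length ≤ Fintype.card V + 2 := by
  have hsub : Finset.univ.filter (fun v => T.degree v = 1) ⊆
      (Finset.univ \ l.toFinset) ∪ {l.head hl, l.getLast hl} := by
    intro v hv
    by_contra hv'
    simp only [Finset.mem_union, Finset.mem_sdiff, Finset.mem_univ, true_and, List.mem_toFinset,
      not_not, Finset.mem_insert, Finset.mem_singleton, not_or] at hv'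
    have := two_le_degree_of_isChain hc hnd hv'.1
      (by rw [List.head?_eq_some_head hl]; simpa [eq_comm] using hv'.2.1)
      (by rw [List.getLast?_eq_some_getLast hl]; simpa [eq_comm] using hv'.2.2)
    simp only [Finset.mem_filter] at hv
    omega
  have hcard := (Finset.card_le_card hsub).trans (Finset.card_union_le _ _)
  rw [Finset.card_univ_sdiff, List.toFinset_card_of_nodup hnd] at hcard
  have := Finset.card_le_two (a := l.head hl) (b := l.getLast hl)
  have := hnd.length_le_card
  omega

end Leaves

end SimpleGraph

open SimpleGraph in
theorem spanning_tree_few_leaves_general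
    {V : Type*} [Fintype V] (n s : ℕ) (hs : 2 ≤ s)
    (hcard : Fintype.card V = n)
    (G : SimpleGraph V) (hconn : G.Connected)
    (hdeg : ∀ u v : V, u ≠ v → ¬ G.Adj u v →
      (n : ℤ) - s + 1 ≤ (G.degree u : ℤ) + (G.degree v : ℤ)) :
    ∃ T : SimpleGraph V, T ≤ G ∧ T.IsTree ∧
      (Finset.univ.filter (fun v : V => T.degree v = 1)).card ≤ s := by
  have := hconn.nonempty
  obtain ⟨l, hl, hne⟩ := G.exists_isLongestPath
  have hlen : n + 2 ≤ l.length + s := by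
    by_cases hlt : l.length < n
    · obtain ⟨w, hw⟩ := List.exists_notMem_of_length_lt_card (hcard ▸ hlt)
      obtain ⟨a, b, hab, hnadj, hlt'⟩ := hl.exists_ne_not_adj_degree_add_degree_lt hconn hw
      have := hdeg a b hab hnadj
      omega
    · omega
  obtain ⟨T, hPT, hTG, hT⟩ := hconn.exists_isTree_le_of_le_of_isAcyclic
    (listPathGraph_le hl.isChain) (isAcyclic_listPathGraph hl.nodup)
  refine ⟨T, hTG, hT, ?_⟩
  have := card_leaves_add_length_le ((isChain_listPathGraph hl.isChain).imp fun _ _ h => hPT h) hl.nodup hne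
  omega

theorem spanning_tree_few_leaves
    {V : Type*} [Fintype V] (n s : ℕ) (hs : 2 ≤ s) (hn : 2 ≤ n)
    (hcard : Fintype.card V = n)
    (G : SimpleGraph V) (hconn : G.Connected)
    (hdeg : ∀ u v : V, u ≠ v → ¬ G.Adj u v →
      (n : ℤ) - s + 1 ≤ (G.degree u : ℤ) + (G.degree v : ℤ)) :
    ∃ T : SimpleGraph V, T ≤ G ∧ T.IsTree ∧
      (Finset.univ.filter (fun v : V => T.degree v = 1)).card ≤ s :=
  spanning_tree_few_leaves_general n s hs hcard G hconn hdeg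
end

section
/- If G is a simple graph with n ≥ 2 vertices such that d(u) + d(v) ≥ n - 1 for each pair of distinct non-adjacent vertices u and v of G, then G contains a Hamiltonian path. -/
/-!
Adding an edge `uv` between non-adjacent vertices keeps the degree condition, so by downward
induction on `G` (there are finitely many graphs on `V`) the graph `G ⊔ edge u v` has a
Hamiltonian path, which we may assume uses `uv`: it is a path `P` of `G` ending at `u` followed by
a path `Q` of `G` starting at `v`. If some vertex `z` of `P` is adjacent to `v` while its
predecessor (if any) is adjacent to `u`, reversing the segment of `P` from `z` to `u` gives a
Hamiltonian path of `G`; the same holds in `Q` with the roles of `u` and `v` exchanged.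
Otherwise, in each of `P` and `Q` the neighbours of `u` and the predecessors of the neighbours
of `v` are disjoint sets of positions not containing the last one, so
`d(u) + d(v) ≤ (|P| - 1) + (|Q| - 1) = n - 2`.
-/

open scoped Classical

namespace List

variable {α : Type*}

theorem IsChain.append_reverse_append {R : α → α → Prop} [Std.Symm R] {l₁ s l₂ : List α}
    (hs : s ≠ []) (h₁ : (l₁ ++ s).IsChain R) (h₂ : l₂.IsChain R)
    (hl : ∀ a ∈ l₁.getLast?, ∀ b ∈ s.getLast?, R a b)
    (hr : ∀ a ∈ s.head?, ∀ b ∈ l₂.head?, R a b) :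
    (l₁ ++ s.reverse ++ l₂).IsChain R := by
  obtain ⟨hl₁, hs', -⟩ := isChain_append.mp h₁
  have hrev : s.reverse.IsChain R := isChain_reverse.mpr (hs'.imp fun _ _ h => Std.Symm.symm _ _ h)
  rw [append_assoc]
  refine hl₁.append (hrev.append h₂ (by simpa [getLast?_reverse] using hr)) ?_
  rwa [head?_append_of_ne_nil _ (by simpa using hs), head?_reverse]

theorem countP_add_countP_tail_le {p q : α → Bool} :
    ∀ {l : List α}, l.IsChain (fun a b => ¬(p a ∧ q b)) → (∀ a ∈ l.getLast?, ¬p a) →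
      l.countP p + l.tail.countP q ≤ l.length - 1
  | [], _, _ => by simp
  | [a], _, hlast => by simpa using hlast
  | a :: b :: l, hl, hlast => by
    obtain ⟨hab, hl⟩ := isChain_cons_cons.mp hl
    have ih := countP_add_countP_tail_le hl (by simpa using hlast)
    simp only [countP_cons, tail_cons, length_cons] at ih ⊢
    grind

theorem countP_add_countP_le_length_sub_one {p q : α → Bool} {l : List α}
    (hl : l.IsChain (fun a b => ¬(p a ∧ q b))) (hhead : ∀ a ∈ l.head?, ¬q a)
    (hlast : ∀ a ∈ l.getLast?, ¬p a) :
    l.countP p + l.countP q ≤ l.length - 1 := by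
  cases l with
  | nil => simp
  | cons a t =>
    simpa [countP_cons, show ¬q a from hhead a rfl] using countP_add_countP_tail_le hl hlast

end List

namespace SimpleGraph

variable {V : Type*} {G : SimpleGraph V}

theorem isChain_of_isChain_sup_edge {l : List V} {u v a b : V} (hab : s(u, v) = s(a, b))
    (hl : l.IsChain (G ⊔ edge u v).Adj) (hb : b ∉ l) : l.IsChain G.Adj := by
  refine hl.imp_of_mem_imp fun x y hx hy hxy => ?_
  rw [sup_adj, adj_edge, hab, Sym2.eq_iff] at hxy
  rcases hxy with hxy | ⟨⟨rfl, rfl⟩ | ⟨rfl, rfl⟩, -⟩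
  · exact hxy
  · exact absurd hy hb
  · exact absurd hx hb

theorem exists_eq_append_of_not_isChain {l : List V} {u v : V} (hnd : l.Nodup)
    (hl : l.IsChain (G ⊔ edge u v).Adj) (hG : ¬l.IsChain G.Adj) :
    ∃ l₁ a b l₂, l = l₁ ++ a :: b :: l₂ ∧ a ≠ b ∧ ¬G.Adj a b ∧
      (l₁ ++ [a]).IsChain G.Adj ∧ (b :: l₂).IsChain G.Adj := by
  simp only [List.isChain_iff_forall_rel_of_append_cons_cons, not_forall] at hG
  obtain ⟨a, b, l₁, l₂, rfl, hnadj⟩ := hG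
  obtain ⟨hl₁, hadj, hl₂⟩ := List.isChain_append_cons_cons.mp hl
  simp only [sup_adj, adj_edge, hnadj, false_or] at hadj
  obtain ⟨hedge, hab⟩ := hadj
  have hnd' : (l₁ ++ [a] ++ b :: l₂).Nodup := by simpa using hnd
  refine ⟨l₁, a, b, l₂, rfl, hab, hnadj,
    isChain_of_isChain_sup_edge hedge hl₁ fun hb => ?_,
    isChain_of_isChain_sup_edge (hedge.trans Sym2.eq_swap) hl₂ fun ha => ?_⟩
  · exact List.disjoint_of_nodup_append hnd' hb List.mem_cons_self
  · exact List.disjoint_of_nodup_append hnd' (by simp) ha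

variable [Fintype V]

def IsHamiltonianList (G : SimpleGraph V) (l : List V) : Prop :=
  l.Perm Finset.univ.toList ∧ l.IsChain G.Adj

theorem isHamiltonianList_toList_univ (h : ∀ u v, u ≠ v → G.Adj u v) :
    G.IsHamiltonianList Finset.univ.toList :=
  ⟨.refl _, ((Finset.nodup_toList _).imp fun huv => h _ _ huv).isChain⟩

theorem IsHamiltonianList.exists_isHamiltonian [Nonempty V] {l : List V}
    (hl : G.IsHamiltonianList l) : ∃ (u v : V) (p : G.Walk u v), p.IsHamiltonian := by
  have hmem (w : V) : w ∈ l := hl.1.mem_iff.mpr (Finset.mem_toList.mpr (Finset.mem_univ w))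
  have hne : l ≠ [] := List.ne_nil_of_mem (hmem (Classical.arbitrary V))
  refine ⟨_, _, Walk.ofSupport l hne hl.2, fun w => ?_⟩
  rw [Walk.support_ofSupport]
  exact List.count_eq_one_of_mem (hl.1.nodup_iff.mpr (Finset.nodup_toList _)) (hmem w)

theorem degree_eq_countP {l : List V} (hl : l.Perm Finset.univ.toList) (v : V) :
    G.degree v = l.countP (G.Adj v ·) := by
  rw [hl.countP_eq, ← card_neighborFinset_eq_degree, neighborFinset_eq_filter,
    Finset.card_def, Finset.filter_val, ← Multiset.countP_eq_card_filter, ← Finset.coe_toList,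
    Multiset.coe_countP]

section TwoPaths

variable {P Q : List V} {u v : V}

theorem exists_isHamiltonianList_of_rotate {l₁ s : List V} (hP : P.IsChain G.Adj)
    (hQ : Q.IsChain G.Adj) (hPQ : (P ++ Q).Perm Finset.univ.toList) (hu : P.getLast? = some u)
    (hv : Q.head? = some v) (hs : s ≠ []) (hsplit : P = l₁ ++ s)
    (hl₁ : ∀ a ∈ l₁.getLast?, G.Adj u a) (hs₁ : ∀ b ∈ s.head?, G.Adj v b) :
    ∃ l, G.IsHamiltonianList l := by
  subst hsplit
  have hsu : s.getLast? = some u := by rwa [List.getLast?_append_of_ne_nil _ hs] at hu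
  have := G.symm
  refine ⟨l₁ ++ s.reverse ++ Q, ?_, hP.append_reverse_append hs hQ ?_ ?_⟩
  · exact (((List.reverse_perm s).append_left l₁).append_right Q).trans hPQ
  · simpa [hsu] using fun a ha => (hl₁ a ha).symm
  · simpa [hv] using fun b hb => (hs₁ b hb).symm

theorem countP_adj_add_countP_adj_le (hP : P.IsChain G.Adj) (hQ : Q.IsChain G.Adj)
    (hPQ : (P ++ Q).Perm Finset.univ.toList) (hu : P.getLast? = some u) (hv : Q.head? = some v)
    (hG : ¬∃ l, G.IsHamiltonianList l) :
    P.countP (G.Adj u ·) + P.countP (G.Adj v ·) ≤ P.length - 1 := by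
  have hPne : P ≠ [] := by rintro rfl; simp at hu
  refine List.countP_add_countP_le_length_sub_one ?_ ?_ ?_
  · rw [List.isChain_iff_forall_rel_of_append_cons_cons]
    simp only [decide_eq_true_eq]
    rintro a b l₁ l₂ rfl ⟨hua, hvb⟩
    exact hG (exists_isHamiltonianList_of_rotate hP hQ hPQ hu hv (l₁ := l₁ ++ [a])
      (List.cons_ne_nil b l₂) (by simp) (by simpa using hua) (by simpa using hvb))
  · intro b hb hvb
    rw [Option.mem_def] at hb
    exact hG (exists_isHamiltonianList_of_rotate hP hQ hPQ hu hv hPne (List.nil_append P).symm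
      (by simp) (by simpa [hb] using hvb))
  · intro a ha hua
    obtain rfl : a = u := Option.some.inj (ha.symm.trans hu)
    simp at hua

theorem exists_isHamiltonianList_of_append (hP : P.IsChain G.Adj) (hQ : Q.IsChain G.Adj)
    (hPQ : (P ++ Q).Perm Finset.univ.toList) (hu : P.getLast? = some u) (hv : Q.head? = some v)
    (hdeg : Fintype.card V - 1 ≤ G.degree u + G.degree v) : ∃ l, G.IsHamiltonianList l := by
  by_contra hG
  have hPbound := countP_adj_add_countP_adj_le hP hQ hPQ hu hv hG
  have hQbound := countP_adj_add_countP_adj_le (P := Q.reverse) (Q := P.reverse)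
    (List.isChain_reverse.mpr (hQ.imp fun _ _ h => h.symm))
    (List.isChain_reverse.mpr (hP.imp fun _ _ h => h.symm))
    (by simpa using (List.reverse_perm (P ++ Q)).trans hPQ)
    (by rwa [List.getLast?_reverse]) (by rwa [List.head?_reverse]) hG
  simp only [List.countP_reverse, List.length_reverse] at hQbound
  have hcard : Fintype.card V = P.length + Q.length := by
    rw [← List.length_append, hPQ.length_eq, Finset.length_toList, Finset.card_univ]
  have hPpos : 0 < P.length := List.length_pos_iff.mpr (by rintro rfl; simp at hu)
  have hQpos : 0 < Q.length := List.length_pos_iff.mpr (by rintro rfl; simp at hv)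
  rw [degree_eq_countP hPQ, degree_eq_countP hPQ, List.countP_append, List.countP_append] at hdeg
  omega

end TwoPaths

theorem exists_isHamiltonianList_of_ore
    (hore : ∀ u v, u ≠ v → ¬G.Adj u v → Fintype.card V - 1 ≤ G.degree u + G.degree v) :
    ∃ l, G.IsHamiltonianList l := by
  induction G using WellFoundedGT.induction with
  | _ G ih =>
  by_cases hcomplete : ∀ u v, u ≠ v → G.Adj u v
  · exact ⟨_, isHamiltonianList_toList_univ hcomplete⟩
  push Not at hcomplete
  obtain ⟨u, v, hne, huv⟩ := hcomplete
  have hle : G ≤ G ⊔ edge u v := le_sup_left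
  -- `congr!` identifies the classical `Fintype` instance on neighbour sets of `G ⊔ edge u v`
  -- with the one synthesized from `G` and `edge u v`.
  obtain ⟨l, hperm, hchain⟩ := ih _ (lt_sup_edge _ _ _ hne huv) fun x y hxy hnadj =>
    (hore x y hxy fun h => hnadj (hle h)).trans
      (add_le_add ((degree_le_of_le hle).trans_eq (by congr!))
        ((degree_le_of_le hle).trans_eq (by congr!)))
  by_cases hG : l.IsChain G.Adj
  · exact ⟨l, hperm, hG⟩
  obtain ⟨l₁, a, b, l₂, rfl, hab, hnadj, h₁, h₂⟩ :=
    exists_eq_append_of_not_isChain (hperm.nodup_iff.mpr (Finset.nodup_toList _)) hchain hG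
  exact exists_isHamiltonianList_of_append h₁ h₂ (by simpa using hperm) (by simp) (by simp)
    (hore a b hab hnadj)

end SimpleGraph

theorem ore_hamiltonian_path
    {V : Type*} [Fintype V] (n : ℕ) (hn : 2 ≤ n) (hcard : Fintype.card V = n)
    (G : SimpleGraph V)
    (hdeg : ∀ u v : V, u ≠ v → ¬ G.Adj u v →
      n - 1 ≤ G.degree u + G.degree v) :
    ∃ (u v : V) (p : G.Walk u v), p.IsHamiltonian := by
  subst hcard
  have : Nonempty V := Fintype.card_pos_iff.mp (by omega)
  obtain ⟨l, hl⟩ := SimpleGraph.exists_isHamiltonianList_of_ore hdeg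
  exact hl.exists_isHamiltonian
end

section
/- Let k ≥ 1 be an integer and let d_1, d_2, ..., d_k be integers with 3 ≤ d_1 ≤ d_2 ≤ ... ≤ d_k. Let G be the complete bipartite graph with bipartition (X, Y), where X = {x_1, x_2, ..., x_k} and Y is a set of 2 - k + (d_1 + d_2 + ... + d_k) vertices disjoint from X. Then for every spanning tree T of G there exists an index j with 1 ≤ j ≤ k such that d_T(x_j) > d_j. -/
open scoped Classical

theorem complete_bipartite_no_bounded_degree_spanning_tree
    (k : ℕ) (hk : 1 ≤ k) (d : Fin k → ℕ)
    (hd3 : ∀ j, 3 ≤ d j) (hmono : Monotone d)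
    (T : SimpleGraph (Fin k ⊕ Fin ((∑ j, d j) + 2 - k)))
    (hT : T ≤ completeBipartiteGraph (Fin k) (Fin ((∑ j, d j) + 2 - k)))
    (hTree : T.IsTree) :
    ∃ j : Fin k, d j < T.degree (Sum.inl j) := by
  classical
  by_contra hcon
  push_neg at hcon
  -- edges of T all join inl to inr
  have hsplit : ∀ e ∈ T.edgeFinset, ∃ a b, e = s(Sum.inl a, Sum.inr b) := by
    intro e he
    rw [SimpleGraph.mem_edgeFinset] at he
    induction e using Sym2.ind with
    | _ u v =>
      have hadj : T.Adj u v := he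
      have := hT hadj
      cases u with
      | inl a =>
        cases v with
        | inl b => simp [completeBipartiteGraph] at this
        | inr b => exact ⟨a, b, rfl⟩
      | inr a =>
        cases v with
        | inl b => exact ⟨b, a, Sym2.eq_swap⟩
        | inr b => simp [completeBipartiteGraph] at this
  -- edgeFinset is union of incidence sets of the inl vertices
  have hcover : T.edgeFinset =
      Finset.univ.biUnion (fun j : Fin k => T.incidenceFinset (Sum.inl j)) := by
    ext e
    simp only [Finset.mem_biUnion, Finset.mem_univ, true_and,
      SimpleGraph.mem_incidenceFinset, SimpleGraph.incidenceSet]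
    constructor
    · intro he
      obtain ⟨a, b, rfl⟩ := hsplit e he
      exact ⟨a, by simpa using he, by simp⟩
    · rintro ⟨j, he, _⟩
      simpa using he
  have hdisj : ∀ j ∈ Finset.univ, ∀ i ∈ Finset.univ, j ≠ i →
      Disjoint (T.incidenceFinset (Sum.inl j)) (T.incidenceFinset (Sum.inl i)) := by
    intro j _ i _ hji
    refine Finset.disjoint_left.mpr ?_
    intro e hej hei
    rw [SimpleGraph.mem_incidenceFinset] at hej hei
    have he : e ∈ T.edgeSet := hej.1
    obtain ⟨a, b, rfl⟩ := hsplit e (by simpa using he)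
    have h1 : (Sum.inl j : Fin k ⊕ Fin ((∑ j, d j) + 2 - k)) ∈
        (s(Sum.inl a, Sum.inr b) : Sym2 _) := hej.2
    have h2 : (Sum.inl i : Fin k ⊕ Fin ((∑ j, d j) + 2 - k)) ∈
        (s(Sum.inl a, Sum.inr b) : Sym2 _) := hei.2
    simp [Sym2.mem_iff] at h1 h2
    exact hji (h1.trans h2.symm)
  have hsum : ∑ j : Fin k, T.degree (Sum.inl j) = T.edgeFinset.card := by
    rw [hcover, Finset.card_biUnion hdisj]
    exact Finset.sum_congr rfl fun j _ =>
      (SimpleGraph.card_incidenceFinset_eq_degree T (Sum.inl j)).symm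
  -- card of edges = card V - 1
  have hk' : k ≤ ∑ j, d j := by
    calc k = ∑ _j : Fin k, 1 := by simp
    _ ≤ ∑ j, d j := Finset.sum_le_sum fun j _ => le_trans (by norm_num) (hd3 j)
  have hcardV : Fintype.card (Fin k ⊕ Fin ((∑ j, d j) + 2 - k)) = (∑ j, d j) + 2 := by
    simp [Fintype.card_sum]
    omega
  have hedges := hTree.card_edgeFinset
  rw [hcardV] at hedges
  have : ∑ j : Fin k, T.degree (Sum.inl j) ≤ ∑ j, d j :=
    Finset.sum_le_sum fun j _ => hcon j
  omega
end
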